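/- Let (g, γ) be a G-circuit, and define γⁿ, gₙ and ξ = ξ(g, γ) as described. Then: (1) d(γⁿ) = r(γⁿ⁺¹) for all n ≥ 1, so the infinite concatenation ξ = γ¹γ²γ³⋯ is a well-defined infinite path; (2) for every finite path β with d(β) = r(γ), the triple s := (βγ, g, β) lies in S_{G,E}, and βξ is a fixed point of s, i.e. (βγ)(g·ξ) = βξ. -/

import Mathlib

/-
The iterates `(gₙ, γⁿ)` of a `G`-circuit are again `G`-circuits, and the concatenations
`γ¹⋯γⁿ` form a chain of prefixes of unbounded length, so they determine a unique infinite
path `ξ(g, γ)`. The circuit `(φ(g, γ), g·γ)` has iterates shifted by one, whence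
`g·ξ(g, γ) = ξ(φ(g, γ), g·γ)` and `ξ(g, γ) = γ ξ(φ(g, γ), g·γ)`. Together these give the
fixed-point equation `γ (g·ξ) = ξ`, and prepending `β` to both sides gives the claim.
-/

/-- Finite paths in a directed graph: `Pth.nil x` is the length-zero path at the
vertex `x`, and `Pth.cons e p` is the path whose first edge is `e`, followed by `p`. -/
inductive Pth (V : Type) (Ed : Type) : Type where
  | nil : V → Pth V Ed
  | cons : Ed → Pth V Ed → Pth V Ed

/-- A self-similar graph `(G, E, φ)`: a group `G` acting on a directed graph `E`
(with vertex set `V`, edge set `Ed`, range `r` and source `d`) by graph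
automorphisms, together with a one-cocycle `φ : G × E¹ → G` for the action on
edges, satisfying `φ(g,e)·x = g·x` for all vertices `x`. -/
structure SelfSimGraph (G V Ed : Type) [Group G] : Type where
  r : Ed → V
  d : Ed → V
  actV : G → V → V
  actE : G → Ed → Ed
  actV_one : ∀ x, actV 1 x = x
  actV_mul : ∀ g h x, actV (g * h) x = actV g (actV h x)
  actE_one : ∀ e, actE 1 e = e
  actE_mul : ∀ g h e, actE (g * h) e = actE g (actE h e)
  r_act : ∀ g e, r (actE g e) = actV g (r e)
  d_act : ∀ g e, d (actE g e) = actV g (d e)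
  phi : G → Ed → G
  phi_cocycle : ∀ g h e, phi (g * h) e = phi g (actE h e) * phi h e
  phi_vertex : ∀ g e x, actV (phi g e) x = actV g x

variable {G V Ed : Type} [Group G]

/-- The range `r(α)` of a finite path. -/
def rngP (S : SelfSimGraph G V Ed) : Pth V Ed → V
  | Pth.nil x => x
  | Pth.cons e _ => S.r e

/-- The source `d(α)` of a finite path. -/
def srcP (S : SelfSimGraph G V Ed) : Pth V Ed → V
  | Pth.nil x => x
  | Pth.cons _ p => srcP S p

/-- Well-formedness of a finite path: consecutive edges match, `d(αᵢ) = r(αᵢ₊₁)`. -/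
def WFP (S : SelfSimGraph G V Ed) : Pth V Ed → Prop
  | Pth.nil _ => True
  | Pth.cons e p => S.d e = rngP S p ∧ WFP S p

/-- The length of a finite path. -/
def lenP : Pth V Ed → ℕ
  | Pth.nil _ => 0
  | Pth.cons _ p => lenP p + 1

/-- Concatenation `αβ` of finite paths (meaningful when `d(α) = r(β)`). -/
def compP : Pth V Ed → Pth V Ed → Pth V Ed
  | Pth.nil _, q => q
  | Pth.cons e p, q => Pth.cons e (compP p q)

/-- The action of `G` extended to finite paths:
`g·x = g·x` on vertices and `g·(eα) = (g·e)(φ(g,e)·α)`. -/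
def actP (S : SelfSimGraph G V Ed) : G → Pth V Ed → Pth V Ed
  | g, Pth.nil x => Pth.nil (S.actV g x)
  | g, Pth.cons e p => Pth.cons (S.actE g e) (actP S (S.phi g e) p)

/-- The cocycle extended to finite paths:
`φ(g,x) = g` on vertices and `φ(g, eα) = φ(φ(g,e), α)`. -/
def phiP (S : SelfSimGraph G V Ed) : G → Pth V Ed → G
  | g, Pth.nil _ => g
  | g, Pth.cons e p => phiP S (S.phi g e) p

/-- A path `τ` is strongly fixed by `g` if `g·τ = τ` and `φ(g,τ) = 1`. -/
def StronglyFixed (S : SelfSimGraph G V Ed) (g : G) (τ : Pth V Ed) : Prop :=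
  WFP S τ ∧ actP S g τ = τ ∧ phiP S g τ = 1

/-- `(G,E,φ)` is pseudo free if `g·e = e` and `φ(g,e) = 1` imply `g = 1`. -/
def PseudoFree (S : SelfSimGraph G V Ed) : Prop :=
  ∀ (g : G) (e : Ed), S.actE g e = e → S.phi g e = 1 → g = 1

/-- `p` is a prefix (initial segment) of `q`: `q = pε` for some path `ε`. -/
def IsPrefixP (S : SelfSimGraph G V Ed) (p q : Pth V Ed) : Prop :=
  ∃ ε, WFP S ε ∧ rngP S ε = srcP S p ∧ compP p ε = q

/-- The set `M_g` of minimal strongly fixed paths for `g`: strongly fixed paths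
none of whose proper prefixes is strongly fixed. -/
def MinSF (S : SelfSimGraph G V Ed) (g : G) : Set (Pth V Ed) :=
  {μ | StronglyFixed S g μ ∧ ∀ p, IsPrefixP S p μ → p ≠ μ → ¬StronglyFixed S g p}

/-- Well-formedness of an infinite path, viewed as a sequence of edges:
`d(ξᵢ) = r(ξᵢ₊₁)`. -/
def InfWF (S : SelfSimGraph G V Ed) (ξ : ℕ → Ed) : Prop :=
  ∀ i, S.d (ξ i) = S.r (ξ (i + 1))

/-- The range `r(ξ)` of an infinite path. -/
def rngInf (S : SelfSimGraph G V Ed) (ξ : ℕ → Ed) : V := S.r (ξ 0)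

/-- `takeP S ξ n` is the finite path `ξ|ₙ = ξ₁⋯ξₙ` (with `ξ|₀ = r(ξ₁)`). -/
def takeP (S : SelfSimGraph G V Ed) : (ℕ → Ed) → ℕ → Pth V Ed
  | ξ, 0 => Pth.nil (S.r (ξ 0))
  | ξ, n + 1 => Pth.cons (ξ 0) (takeP S (fun i => ξ (i + 1)) n)

/-- Membership of an infinite path in the cylinder `Z(α)`:
the initial segment of `ξ` of length `|α|` equals `α`. -/
def InZ (S : SelfSimGraph G V Ed) (α : Pth V Ed) (ξ : ℕ → Ed) : Prop :=
  takeP S ξ (lenP α) = α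

/-- The infinite path `αξ` obtained by prepending a finite path to an infinite one. -/
def prepSeq : Pth V Ed → (ℕ → Ed) → ℕ → Ed
  | Pth.nil _, ξ, n => ξ n
  | Pth.cons e _, _, 0 => e
  | Pth.cons _ p, ξ, n + 1 => prepSeq p ξ n

/-- Dropping the first `k` edges of an infinite path. -/
def dropSeq (k : ℕ) (ξ : ℕ → Ed) : ℕ → Ed := fun n => ξ (n + k)

/-- The space `E^∞` of infinite paths. -/
def InfPath (S : SelfSimGraph G V Ed) : Type := {ξ : ℕ → Ed // InfWF S ξ}

/-- The topology of `E^∞`: the subspace topology induced from the product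
topology on `(E¹)^ℕ`, `E¹` being discrete.  Its basis consists of the
cylinders `Z(α)`. -/
def infTop (S : SelfSimGraph G V Ed) : TopologicalSpace (InfPath S) :=
  TopologicalSpace.induced (fun ξ => ξ.1)
    (@Pi.topologicalSpace ℕ (fun _ => Ed) (fun _ => ⊥))

/-- Specification of the (unique) action of `G` on `E^∞`: `(g·ξ)|ₙ = g·(ξ|ₙ)`. -/
def ActSpec (S : SelfSimGraph G V Ed) (act : G → (ℕ → Ed) → ℕ → Ed) : Prop :=
  ∀ (g : G) (ξ : ℕ → Ed) (n : ℕ), takeP S (act g ξ) n = actP S g (takeP S ξ n)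

/-- The action of a triple `s = (α, g, β) ∈ S_{G,E}` on `E^∞`: it sends
`βξ ∈ Z(β)` to `α(g·ξ)`. -/
def sActSeq (S : SelfSimGraph G V Ed) (act : G → (ℕ → Ed) → ℕ → Ed)
    (α : Pth V Ed) (g : G) (β : Pth V Ed) (ξ : ℕ → Ed) : ℕ → Ed :=
  prepSeq α (act g (dropSeq (lenP β) ξ))

/-- The set of fixed points in `E^∞` of the element `s = (α, g, β)` of `S_{G,E}`. -/
def FixSet (S : SelfSimGraph G V Ed) (act : G → (ℕ → Ed) → ℕ → Ed)
    (α : Pth V Ed) (g : G) (β : Pth V Ed) : Set (InfPath S) :=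
  {η | InZ S β η.1 ∧ sActSeq S act α g β η.1 = η.1}

/-- A vertex `x` is simple if `r⁻¹(x)` is a singleton. -/
def SimpleVtx (S : SelfSimGraph G V Ed) (x : V) : Prop := ∃! e : Ed, S.r e = x

/-- A path `γ = γ₁⋯γₙ` has no entry if `d(γᵢ)` is simple for every `i`. -/
def NoEntry (S : SelfSimGraph G V Ed) : Pth V Ed → Prop
  | Pth.nil _ => True
  | Pth.cons e p => SimpleVtx S (S.d e) ∧ NoEntry S p

/-- A circuit: a path `γ` of nonzero length with `d(γ) = r(γ)`. -/
def Circuit (S : SelfSimGraph G V Ed) (γ : Pth V Ed) : Prop :=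
  WFP S γ ∧ 1 ≤ lenP γ ∧ srcP S γ = rngP S γ

/-- A `G`-circuit: a pair `(g,γ)` with `γ` of nonzero length and `d(γ) = g·r(γ)`. -/
def GCircuit (S : SelfSimGraph G V Ed) (g : G) (γ : Pth V Ed) : Prop :=
  WFP S γ ∧ 1 ≤ lenP γ ∧ srcP S γ = S.actV g (rngP S γ)

/-- `g` is slack at `x` if all sufficiently long paths with range `x` are
strongly fixed by `g`. -/
def SlackAt (S : SelfSimGraph G V Ed) (g : G) (x : V) : Prop :=
  ∃ n : ℕ, ∀ γ, WFP S γ → rngP S γ = x → n ≤ lenP γ → StronglyFixed S g γ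

/-- The sequence `(γⁿ, gₙ)` attached to a `G`-circuit `(g, γ)`:
`γ¹ = γ`, `g₁ = g`, `γⁿ⁺¹ = gₙ·γⁿ`, `gₙ₊₁ = φ(gₙ, γⁿ)` (indexed from `0`). -/
def circIter (S : SelfSimGraph G V Ed) (g : G) (γ : Pth V Ed) : ℕ → Pth V Ed × G
  | 0 => (γ, g)
  | n + 1 =>
      (actP S (circIter S g γ n).2 (circIter S g γ n).1,
       phiP S (circIter S g γ n).2 (circIter S g γ n).1)

/-- The finite concatenation `γ¹γ²⋯γⁿ`. -/
def circConcat (S : SelfSimGraph G V Ed) (g : G) (γ : Pth V Ed) : ℕ → Pth V Ed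
  | 0 => Pth.nil (rngP S γ)
  | n + 1 => compP (circConcat S g γ n) (circIter S g γ n).1

/-- `ξ` is the infinite concatenation `ξ(g,γ) = γ¹γ²γ³⋯`: it is an infinite path
whose initial segments are the finite concatenations `γ¹⋯γⁿ`. -/
def IsCircPath (S : SelfSimGraph G V Ed) (g : G) (γ : Pth V Ed) (ξ : ℕ → Ed) : Prop :=
  InfWF S ξ ∧ ∀ n, takeP S ξ (lenP (circConcat S g γ n)) = circConcat S g γ n

/-- `x ⇀ y`: there is a finite path with source `x` and range `y`. -/
def RelPath (S : SelfSimGraph G V Ed) (x y : V) : Prop :=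
  ∃ α, WFP S α ∧ srcP S α = x ∧ rngP S α = y

/-- `x ∼ y`: `x` and `y` are in the same `G`-orbit. -/
def RelOrb (S : SelfSimGraph G V Ed) (x y : V) : Prop :=
  ∃ g : G, S.actV g x = y

/-- `x ≫ y`: there is a vertex `u` with `x ⇀ u ∼ y`. -/
def RelGG (S : SelfSimGraph G V Ed) (x y : V) : Prop :=
  ∃ u, RelPath S x u ∧ RelOrb S u y

/-- A nonzero element `(α, g, β)` of `S_{G,E}`: `α, β ∈ E*`, `g ∈ G`, with
`d(α) = g·d(β)`. -/
def SGETriple (S : SelfSimGraph G V Ed) : Type :=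
  {t : Pth V Ed × G × Pth V Ed //
    WFP S t.1 ∧ WFP S t.2.2 ∧ srcP S t.1 = S.actV t.2.1 (srcP S t.2.2)}

/-- The inverse semigroup `S_{G,E}` (as a set): the triples together with `0 = none`. -/
def SGE (S : SelfSimGraph G V Ed) : Type := Option (SGETriple S)

/-- Forget the membership proofs. -/
def sgeToRaw (S : SelfSimGraph G V Ed) : SGE S → Option (Pth V Ed × G × Pth V Ed) :=
  Option.map Subtype.val

/-- The adjoint: `(α, g, β)* = (β, g⁻¹, α)`, `0* = 0`. -/
def starSGE (S : SelfSimGraph G V Ed) : SGE S → SGE S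
  | none => none
  | some s =>
      some ⟨(s.1.2.2, s.1.2.1⁻¹, s.1.1),
        ⟨s.2.2.1, s.2.1, by
          rw [s.2.2.2, ← S.actV_mul, inv_mul_cancel, S.actV_one]⟩⟩

/-- The idempotent `f_α = (α, 1, α)`. -/
def fIdem (S : SelfSimGraph G V Ed) (α : Pth V Ed) (h : WFP S α) : SGE S :=
  some ⟨(α, 1, α), ⟨h, h, by rw [S.actV_one]⟩⟩

/-- Specification of the multiplication of `S_{G,E}`:
`0` is absorbing; `(α,g,β)(γ,h,δ) = (α(g·ε), φ(g,ε)h, δ)` if `γ = βε`;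
`(α,g,β)(γ,h,δ) = (α, gφ(h⁻¹,ε)⁻¹, δ(h⁻¹·ε))` if `β = γε`; `0` otherwise. -/
def MulSpec (S : SelfSimGraph G V Ed) (mul : SGE S → SGE S → SGE S) : Prop :=
  (∀ t, mul none t = none) ∧
  (∀ s, mul s none = none) ∧
  (∀ (s t : SGETriple S) (ε : Pth V Ed),
     WFP S ε → rngP S ε = srcP S s.1.2.2 → t.1.1 = compP s.1.2.2 ε →
       sgeToRaw S (mul (some s) (some t)) =
         some (compP s.1.1 (actP S s.1.2.1 ε), phiP S s.1.2.1 ε * t.1.2.1, t.1.2.2)) ∧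
  (∀ (s t : SGETriple S) (ε : Pth V Ed),
     WFP S ε → rngP S ε = srcP S t.1.1 → s.1.2.2 = compP t.1.1 ε →
       sgeToRaw S (mul (some s) (some t)) =
         some (s.1.1, s.1.2.1 * (phiP S t.1.2.1⁻¹ ε)⁻¹,
               compP t.1.2.2 (actP S t.1.2.1⁻¹ ε))) ∧
  (∀ (s t : SGETriple S),
     (¬∃ ε, WFP S ε ∧ rngP S ε = srcP S s.1.2.2 ∧ t.1.1 = compP s.1.2.2 ε) →
     (¬∃ ε, WFP S ε ∧ rngP S ε = srcP S t.1.1 ∧ s.1.2.2 = compP t.1.1 ε) →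
       mul (some s) (some t) = none)

/-- Topological freeness of the standard action of `S_{G,E}` on `E^∞`: for every
nonzero `s = (α, g, β)`, every interior fixed point `ζ` of `s` satisfies `α = β`
and `ζ ∈ Z(ατ)` for some `τ` strongly fixed by `g`. -/
def TopFree (S : SelfSimGraph G V Ed) (act : G → (ℕ → Ed) → ℕ → Ed) : Prop :=
  ∀ (α : Pth V Ed) (g : G) (β : Pth V Ed),
    WFP S α → WFP S β → srcP S α = S.actV g (srcP S β) →
    ∀ ζ : InfPath S, ζ ∈ @interior (InfPath S) (infTop S) (FixSet S act α g β) →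
      α = β ∧ ∃ τ : Pth V Ed, WFP S τ ∧ rngP S τ = srcP S α ∧
        StronglyFixed S g τ ∧ InZ S (compP α τ) ζ.1

section

variable (S : SelfSimGraph G V Ed)

section FinitePaths

lemma rngP_actP (g : G) (p : Pth V Ed) : rngP S (actP S g p) = S.actV g (rngP S p) := by
  cases p <;> simp [actP, rngP, S.r_act]

lemma actV_phiP (g : G) (p : Pth V Ed) (x : V) : S.actV (phiP S g p) x = S.actV g x := by
  induction p generalizing g with
  | nil y => rfl
  | cons e p ih => simp [phiP, ih, S.phi_vertex]

lemma srcP_actP (g : G) (p : Pth V Ed) : srcP S (actP S g p) = S.actV g (srcP S p) := by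
  induction p generalizing g with
  | nil y => rfl
  | cons e p ih => simp [actP, srcP, ih, S.phi_vertex]

lemma lenP_actP (g : G) (p : Pth V Ed) : lenP (actP S g p) = lenP p := by
  induction p generalizing g with
  | nil y => rfl
  | cons e p ih => simp [actP, lenP, ih]

lemma wfp_actP (g : G) {p : Pth V Ed} (hp : WFP S p) : WFP S (actP S g p) := by
  induction p generalizing g with
  | nil y => trivial
  | cons e p ih => exact ⟨by rw [rngP_actP, S.d_act, hp.1, S.phi_vertex], ih _ hp.2⟩

lemma srcP_compP (p q : Pth V Ed) : srcP S (compP p q) = srcP S q := by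
  induction p with
  | nil y => rfl
  | cons e p ih => exact ih

lemma rngP_compP {p q : Pth V Ed} (h : rngP S q = srcP S p) :
    rngP S (compP p q) = rngP S p := by
  cases p with
  | nil y => exact h
  | cons e p => rfl

lemma lenP_compP (p q : Pth V Ed) : lenP (compP p q) = lenP p + lenP q := by
  induction p with
  | nil y => simp [compP, lenP]
  | cons e p ih => simp only [compP, lenP, ih]; omega

lemma wfp_compP {p q : Pth V Ed} (hp : WFP S p) (hq : WFP S q) (h : rngP S q = srcP S p) :
    WFP S (compP p q) := by
  induction p with
  | nil y => exact hq
  | cons e p ih => exact ⟨by rw [rngP_compP S (p := p) h, hp.1], ih hp.2 h⟩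

lemma compP_assoc (p q r : Pth V Ed) : compP (compP p q) r = compP p (compP q r) := by
  induction p with
  | nil y => rfl
  | cons e p ih => simp [compP, ih]

lemma compP_nil_srcP (p : Pth V Ed) : compP p (Pth.nil (srcP S p)) = p := by
  induction p with
  | nil y => rfl
  | cons e p ih => simpa [compP, srcP] using ih

lemma phiP_compP (g : G) (p q : Pth V Ed) : phiP S g (compP p q) = phiP S (phiP S g p) q := by
  induction p generalizing g with
  | nil y => rfl
  | cons e p ih => simp [compP, phiP, ih]

lemma actP_compP (g : G) (p q : Pth V Ed) :
    actP S g (compP p q) = compP (actP S g p) (actP S (phiP S g p) q) := by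
  induction p generalizing g with
  | nil y => rfl
  | cons e p ih => simp [compP, actP, phiP, ih]

end FinitePaths

section InfinitePaths

def nthEdge : Pth V Ed → ℕ → Option Ed
  | Pth.nil _, _ => none
  | Pth.cons e _, 0 => some e
  | Pth.cons _ p, n + 1 => nthEdge p n

lemma exists_nthEdge_eq_some {p : Pth V Ed} {i : ℕ} (hi : i < lenP p) :
    ∃ e, nthEdge p i = some e := by
  induction p generalizing i with
  | nil y => simp [lenP] at hi
  | cons e p ih =>
    cases i with
    | zero => exact ⟨e, rfl⟩
    | succ j => exact ih (by simp only [lenP] at hi; omega)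

lemma nthEdge_compP_of_lt {p : Pth V Ed} (q : Pth V Ed) {i : ℕ} (hi : i < lenP p) :
    nthEdge (compP p q) i = nthEdge p i := by
  induction p generalizing i with
  | nil y => simp [lenP] at hi
  | cons e p ih =>
    cases i with
    | zero => rfl
    | succ j => exact ih (by simp only [lenP] at hi; omega)

lemma nthEdge_compP_lenP_add (p q : Pth V Ed) (j : ℕ) :
    nthEdge (compP p q) (lenP p + j) = nthEdge q j := by
  induction p with
  | nil y => simp [lenP, compP]
  | cons e p ih => rw [show lenP (Pth.cons e p) + j = lenP p + j + 1 by simp only [lenP]; omega]; exact ih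

lemma rngP_eq_of_nthEdge_zero {p : Pth V Ed} {e : Ed} (h : nthEdge p 0 = some e) :
    rngP S p = S.r e := by
  cases p with
  | nil y => cases h
  | cons e' p => cases h; rfl

lemma nthEdge_takeP (ξ : ℕ → Ed) {n i : ℕ} (hi : i < n) : nthEdge (takeP S ξ n) i = some (ξ i) := by
  induction n generalizing ξ i with
  | zero => omega
  | succ m ih =>
    cases i with
    | zero => rfl
    | succ j => exact ih (fun k => ξ (k + 1)) (by omega)

lemma rngP_takeP (ξ : ℕ → Ed) (n : ℕ) : rngP S (takeP S ξ n) = S.r (ξ 0) := by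
  cases n <;> rfl

lemma takeP_zero_eq_nil_rngP (ξ : ℕ → Ed) (n : ℕ) :
    takeP S ξ 0 = Pth.nil (rngP S (takeP S ξ n)) := by
  rw [rngP_takeP]; rfl

/-- The final vertex of `ξ|ₙ` is `r(ξₙ₊₁)`, hence the condition on `ξ (lenP p)`. -/
lemma takeP_lenP_eq {p : Pth V Ed} {ξ : ℕ → Ed}
    (hedge : ∀ i < lenP p, nthEdge p i = some (ξ i)) (hsrc : S.r (ξ (lenP p)) = srcP S p) :
    takeP S ξ (lenP p) = p := by
  induction p generalizing ξ with
  | nil y => exact congrArg Pth.nil hsrc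
  | cons e p ih =>
    have h0 : ξ 0 = e := by simpa [nthEdge] using (hedge 0 (by simp [lenP])).symm
    change Pth.cons (ξ 0) (takeP S (fun k => ξ (k + 1)) (lenP p)) = _
    rw [h0, ih (fun i hi => hedge (i + 1) (by simp only [lenP]; omega)) hsrc]

lemma d_eq_r_of_wfp_takeP {ξ : ℕ → Ed} {n i : ℕ} (h : WFP S (takeP S ξ n)) (hi : i + 1 < n) :
    S.d (ξ i) = S.r (ξ (i + 1)) := by
  induction n generalizing ξ i with
  | zero => omega
  | succ m ih =>
    obtain ⟨hd, hwf⟩ : S.d (ξ 0) = rngP S (takeP S (fun k => ξ (k + 1)) m) ∧ WFP S _ := h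
    cases i with
    | zero => rwa [rngP_takeP] at hd
    | succ j => exact ih (ξ := fun k => ξ (k + 1)) hwf (by omega)

lemma infWF_of_wfp_takeP {ξ : ℕ → Ed} (h : ∀ i, ∃ n, i + 1 < n ∧ WFP S (takeP S ξ n)) :
    InfWF S ξ := fun i =>
  let ⟨_, hi, hwf⟩ := h i
  d_eq_r_of_wfp_takeP S hwf hi

lemma eq_of_takeP_eq {ξ η : ℕ → Ed} (h : ∀ i, ∃ n, i < n ∧ takeP S ξ n = takeP S η n) :
    ξ = η := by
  funext i
  obtain ⟨n, hi, heq⟩ := h i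
  simpa [nthEdge_takeP S _ hi] using congrArg (nthEdge · i) heq

lemma prepSeq_compP (p q : Pth V Ed) (η : ℕ → Ed) :
    prepSeq (compP p q) η = prepSeq p (prepSeq q η) := by
  induction p with
  | nil y => rfl
  | cons e p ih =>
    funext n
    cases n with
    | zero => rfl
    | succ m => exact congrFun ih m

lemma takeP_prepSeq (p : Pth V Ed) (η : ℕ → Ed) (n : ℕ) :
    takeP S (prepSeq p η) (lenP p + n) = compP p (takeP S η n) := by
  induction p with
  | nil y => simp only [lenP, Nat.zero_add]; rfl
  | cons e p ih =>
    rw [show lenP (Pth.cons e p) + n = lenP p + n + 1 by simp only [lenP]; omega]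
    exact congrArg (Pth.cons e) ih

end InfinitePaths

section Prefixes

variable {S}

lemma IsPrefixP.refl (p : Pth V Ed) : IsPrefixP S p p :=
  ⟨Pth.nil (srcP S p), trivial, rfl, compP_nil_srcP S p⟩

lemma IsPrefixP.trans {p q r : Pth V Ed} (hpq : IsPrefixP S p q) (hqr : IsPrefixP S q r) :
    IsPrefixP S p r := by
  obtain ⟨ε, hε, hεr, rfl⟩ := hpq
  obtain ⟨ε', hε', hε'r, rfl⟩ := hqr
  rw [srcP_compP] at hε'r
  exact ⟨compP ε ε', wfp_compP S hε hε' hε'r, by rw [rngP_compP S hε'r, hεr],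
    (compP_assoc p ε ε').symm⟩

lemma IsPrefixP.nthEdge_of_lt {p q : Pth V Ed} (h : IsPrefixP S p q) {i : ℕ} (hi : i < lenP p) :
    nthEdge q i = nthEdge p i := by
  obtain ⟨ε, -, -, rfl⟩ := h
  exact nthEdge_compP_of_lt ε hi

lemma IsPrefixP.r_eq_srcP_of_nthEdge_lenP {p q : Pth V Ed} (h : IsPrefixP S p q) {e : Ed}
    (he : nthEdge q (lenP p) = some e) : S.r e = srcP S p := by
  obtain ⟨ε, -, hεr, rfl⟩ := h
  rw [← Nat.add_zero (lenP p), nthEdge_compP_lenP_add] at he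
  rw [← rngP_eq_of_nthEdge_zero S he, hεr]

lemma isPrefixP_of_le {P : ℕ → Pth V Ed} (hP : ∀ n, IsPrefixP S (P n) (P (n + 1)))
    {n m : ℕ} (h : n ≤ m) : IsPrefixP S (P n) (P m) := by
  induction m, h using Nat.le_induction with
  | base => exact IsPrefixP.refl _
  | succ k _ ih => exact ih.trans (hP k)

theorem exists_forall_takeP_eq_of_isPrefixP {P : ℕ → Pth V Ed}
    (hP : ∀ n, IsPrefixP S (P n) (P (n + 1))) (hlen : ∀ n, n ≤ lenP (P n)) :
    ∃ ξ : ℕ → Ed, ∀ n, takeP S ξ (lenP (P n)) = P n := by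
  have hedge : ∀ i, ∃ e, ∀ n, i < lenP (P n) → nthEdge (P n) i = some e := by
    intro i
    obtain ⟨e, he⟩ := exists_nthEdge_eq_some (hlen (i + 1))
    refine ⟨e, fun n hn => ?_⟩
    rcases le_total n (i + 1) with h | h
    · rw [← (isPrefixP_of_le hP h).nthEdge_of_lt hn, he]
    · rw [(isPrefixP_of_le hP h).nthEdge_of_lt (hlen (i + 1)), he]
  choose ξ hξ using hedge
  refine ⟨ξ, fun n => takeP_lenP_eq S (fun i hi => hξ i n hi) ?_⟩
  have hlt : lenP (P n) < lenP (P (lenP (P n) + 1)) := hlen _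
  exact (isPrefixP_of_le hP (by have := hlen n; omega)).r_eq_srcP_of_nthEdge_lenP (hξ _ _ hlt)

end Prefixes

section Circuits

variable {S} {g : G} {γ : Pth V Ed}

lemma GCircuit.shift (hγ : GCircuit S g γ) : GCircuit S (phiP S g γ) (actP S g γ) :=
  ⟨wfp_actP S g hγ.1, by rw [lenP_actP]; exact hγ.2.1,
    by rw [srcP_actP, rngP_actP, actV_phiP, hγ.2.2]⟩

lemma GCircuit.circIter (hγ : GCircuit S g γ) (n : ℕ) :
    GCircuit S (circIter S g γ n).2 (circIter S g γ n).1 := by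
  induction n with
  | zero => exact hγ
  | succ m ih => exact ih.shift

lemma srcP_circIter_eq_rngP_succ (hγ : GCircuit S g γ) (n : ℕ) :
    srcP S (circIter S g γ n).1 = rngP S (circIter S g γ (n + 1)).1 :=
  ((hγ.circIter n).2.2).trans (rngP_actP S _ _).symm

variable (S g γ)

lemma circIter_succ_eq_shift (n : ℕ) :
    circIter S g γ (n + 1) = circIter S (phiP S g γ) (actP S g γ) n := by
  induction n with
  | zero => rfl
  | succ m ih => rw [circIter, ih, circIter]

lemma lenP_circIter (n : ℕ) : lenP (circIter S g γ n).1 = lenP γ := by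
  induction n with
  | zero => rfl
  | succ m ih => exact (lenP_actP S _ _).trans ih

lemma lenP_circConcat (n : ℕ) : lenP (circConcat S g γ n) = n * lenP γ := by
  induction n with
  | zero => simp [circConcat, lenP]
  | succ m ih => rw [circConcat, lenP_compP, ih, lenP_circIter, Nat.succ_mul]

lemma phiP_circConcat (n : ℕ) : phiP S g (circConcat S g γ n) = (circIter S g γ n).2 := by
  induction n with
  | zero => rfl
  | succ m ih => rw [circConcat, phiP_compP, ih]; rfl

lemma actP_circConcat (n : ℕ) :
    actP S g (circConcat S g γ n) = circConcat S (phiP S g γ) (actP S g γ) n := by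
  induction n with
  | zero => exact congrArg Pth.nil (rngP_actP S g γ).symm
  | succ m ih =>
    rw [circConcat, actP_compP, ih, phiP_circConcat, circConcat, ← circIter_succ_eq_shift]; rfl

variable {S g γ}

lemma srcP_circConcat (hγ : GCircuit S g γ) (n : ℕ) :
    srcP S (circConcat S g γ n) = rngP S (circIter S g γ n).1 := by
  cases n with
  | zero => rfl
  | succ m => rw [circConcat, srcP_compP, srcP_circIter_eq_rngP_succ hγ]

lemma isPrefixP_circConcat_succ (hγ : GCircuit S g γ) (n : ℕ) :
    IsPrefixP S (circConcat S g γ n) (circConcat S g γ (n + 1)) :=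
  ⟨_, (hγ.circIter n).1, (srcP_circConcat hγ n).symm, rfl⟩

lemma wfp_circConcat (hγ : GCircuit S g γ) (n : ℕ) : WFP S (circConcat S g γ n) := by
  induction n with
  | zero => trivial
  | succ m ih => exact wfp_compP S ih (hγ.circIter m).1 (srcP_circConcat hγ m).symm

lemma le_lenP_circConcat (hγ : GCircuit S g γ) (n : ℕ) : n ≤ lenP (circConcat S g γ n) := by
  rw [lenP_circConcat]
  exact Nat.le_mul_of_pos_right n hγ.2.1

lemma circConcat_succ_eq_compP_shift (hγ : GCircuit S g γ) (n : ℕ) :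
    circConcat S g γ (n + 1) = compP γ (circConcat S (phiP S g γ) (actP S g γ) n) := by
  induction n with
  | zero =>
    change γ = compP γ (Pth.nil (rngP S (actP S g γ)))
    rw [rngP_actP, ← hγ.2.2, compP_nil_srcP]
  | succ m ih => rw [circConcat, ih, circIter_succ_eq_shift, compP_assoc, ← circConcat]

end Circuits

section CircPaths

variable {S} {g : G} {γ : Pth V Ed}

lemma isCircPath_of_takeP (hγ : GCircuit S g γ) {ξ : ℕ → Ed}
    (h : ∀ n, takeP S ξ (lenP (circConcat S g γ n)) = circConcat S g γ n) :
    IsCircPath S g γ ξ := by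
  refine ⟨infWF_of_wfp_takeP S fun i => ⟨_, le_lenP_circConcat hγ (i + 2), ?_⟩, h⟩
  rw [h]
  exact wfp_circConcat hγ _

lemma exists_isCircPath (hγ : GCircuit S g γ) : ∃ ξ, IsCircPath S g γ ξ :=
  let ⟨ξ, hξ⟩ := exists_forall_takeP_eq_of_isPrefixP (isPrefixP_circConcat_succ hγ)
    (le_lenP_circConcat hγ)
  ⟨ξ, isCircPath_of_takeP hγ hξ⟩

lemma IsCircPath.unique (hγ : GCircuit S g γ) {ξ η : ℕ → Ed} (hξ : IsCircPath S g γ ξ)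
    (hη : IsCircPath S g γ η) : ξ = η :=
  eq_of_takeP_eq S fun i => ⟨_, le_lenP_circConcat hγ (i + 1), by rw [hξ.2, hη.2]⟩

lemma IsCircPath.act (hγ : GCircuit S g γ) {act : G → (ℕ → Ed) → ℕ → Ed}
    (hact : ActSpec S act) {ξ : ℕ → Ed} (hξ : IsCircPath S g γ ξ) :
    IsCircPath S (phiP S g γ) (actP S g γ) (act g ξ) :=
  isCircPath_of_takeP hγ.shift fun n => by
    rw [← actP_circConcat, lenP_actP, hact, hξ.2]

lemma IsCircPath.prepend (hγ : GCircuit S g γ) {η : ℕ → Ed}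
    (hη : IsCircPath S (phiP S g γ) (actP S g γ) η) : IsCircPath S g γ (prepSeq γ η) := by
  have hsucc : ∀ n, takeP S (prepSeq γ η) (lenP (circConcat S g γ (n + 1))) =
      circConcat S g γ (n + 1) := fun n => by
    rw [circConcat_succ_eq_compP_shift hγ, lenP_compP, takeP_prepSeq, hη.2]
  refine isCircPath_of_takeP hγ fun n => ?_
  cases n with
  | zero =>
    have h := takeP_zero_eq_nil_rngP S (prepSeq γ η) (lenP (circConcat S g γ 1))
    rwa [hsucc 0] at h
  | succ n => exact hsucc n

lemma IsCircPath.prepSeq_act (hγ : GCircuit S g γ) {act : G → (ℕ → Ed) → ℕ → Ed}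
    (hact : ActSpec S act) {ξ : ℕ → Ed} (hξ : IsCircPath S g γ ξ) :
    prepSeq γ (act g ξ) = ξ :=
  ((hξ.act hγ hact).prepend hγ).unique hγ hξ

end CircPaths

end

theorem statement11_general {G V Ed : Type} [Group G]
    (S : SelfSimGraph G V Ed)
    (g : G) (γ : Pth V Ed) (hγ : GCircuit S g γ)
    (act : G → (ℕ → Ed) → ℕ → Ed) (hact : ActSpec S act) :
    (∀ n : ℕ, srcP S (circIter S g γ n).1 = rngP S (circIter S g γ (n + 1)).1) ∧
    (∃! ξ : ℕ → Ed, IsCircPath S g γ ξ) ∧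
    (∀ β : Pth V Ed, WFP S β → srcP S β = rngP S γ →
      srcP S (compP β γ) = S.actV g (srcP S β) ∧
      ∀ ξ : ℕ → Ed, IsCircPath S g γ ξ →
        prepSeq (compP β γ) (act g ξ) = prepSeq β ξ) := by
  refine ⟨srcP_circIter_eq_rngP_succ hγ, ?_, fun β _ hsrc => ⟨?_, fun ξ hξ => ?_⟩⟩
  · obtain ⟨ξ, hξ⟩ := exists_isCircPath hγ
    exact ⟨ξ, hξ, fun η hη => hη.unique hγ hξ⟩
  · rw [srcP_compP, hγ.2.2, hsrc]
  · rw [prepSeq_compP, hξ.prepSeq_act hγ hact]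

/-- Given a `G`-circuit `(g, γ)` with attached sequences `γⁿ, gₙ`: (1) the
sources and ranges match, so the infinite concatenation `ξ = γ¹γ²γ³⋯` is a
well-defined infinite path; (2) for every finite path `β` with `d(β) = r(γ)`,
the triple `s = (βγ, g, β)` lies in `S_{G,E}` and `βξ` is a fixed point of `s`,
i.e. `(βγ)(g·ξ) = βξ`. -/
theorem statement11 {G V Ed : Type} [Group G] [Fintype V] [Fintype Ed]
    (S : SelfSimGraph G V Ed) (hNoSources : ∀ x : V, ∃ e : Ed, S.r e = x)
    (g : G) (γ : Pth V Ed) (hγ : GCircuit S g γ)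
    (act : G → (ℕ → Ed) → ℕ → Ed) (hact : ActSpec S act) :
    (∀ n : ℕ, srcP S (circIter S g γ n).1 = rngP S (circIter S g γ (n + 1)).1) ∧
    (∃! ξ : ℕ → Ed, IsCircPath S g γ ξ) ∧
    (∀ β : Pth V Ed, WFP S β → srcP S β = rngP S γ →
      srcP S (compP β γ) = S.actV g (srcP S β) ∧
      ∀ ξ : ℕ → Ed, IsCircPath S g γ ξ →
        prepSeq (compP β γ) (act g ξ) = prepSeq β ξ) :=
  statement11_general S g γ hγ act hact
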